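/- For a Tychonoff pseudocompact space X, the following are equivalent: (i) X is selectively ω-bounded; (ii) X is Ascoli; (iii) X is sequentially Ascoli. -/

import Mathlib

open Filter Topology Set

def SelectivelyOmegaBounded (X : Type*) [TopologicalSpace X] : Prop :=
  ∀ U : ℕ → Set X, (∀ n, IsOpen (U n)) → (∀ n, (U n).Nonempty) →
    ∃ x : ℕ → X, (∀ n, x n ∈ U n) ∧
      ∃ φ : ℕ → ℕ, StrictMono φ ∧ IsCompact (closure (Set.range (x ∘ φ)))

def Pseudocompact (X : Type*) [TopologicalSpace X] : Prop :=
  ∀ f : C(X, ℝ), ∃ M : ℝ, ∀ x, |f x| ≤ M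

def EquicontinuousSet {X : Type*} [TopologicalSpace X] (S : Set C(X, ℝ)) : Prop :=
  Equicontinuous (fun f : S => ⇑(f : C(X, ℝ)))

def AscoliSpace (X : Type*) [TopologicalSpace X] : Prop :=
  ∀ S : Set C(X, ℝ), IsCompact S → EquicontinuousSet S

def SeqAscoliSpace (X : Type*) [TopologicalSpace X] : Prop :=
  ∀ (f : ℕ → C(X, ℝ)) (g : C(X, ℝ)), Tendsto f atTop (𝓝 g) →
    EquicontinuousSet (insert g (Set.range f))

/-!
Selective ω-boundedness gives the Ascoli property: if a compact `S ⊆ C_c(X)` failed to be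
equicontinuous at `z`, one builds `f_n ∈ S` and nonempty open sets `U_n` on which `f_n` moves by
more than `3δ` away from `f_n z` while every earlier `f_m` stays `δ`-close to `f_m z`. A selection
`x_n ∈ U_n` with a subsequence of compact closure `K` yields, by compactness of `S` restricted to
`K ∪ {z}`, two members `f_m, f_n` (`m < n`) that are uniformly `δ`-close on `K ∪ {z}`,
contradicting the triangle inequality at `x_n`.

Conversely, if `(U_n)` witnesses the failure of selective ω-boundedness, every compact set meets
only finitely many `U_n`, so bump functions `G_n` supported in `U_n` converge to `0` in `C_c(X)`.
Pseudocompactness forbids the open sets `{G_n > 1/2}` to be locally finite (otherwise `∑ n • G_n`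
would be an unbounded continuous function), and at a point where they accumulate the sequence
`(G_n)` is not equicontinuous.
-/

section

variable {X : Type*} [TopologicalSpace X]

theorem AscoliSpace.seqAscoliSpace (h : AscoliSpace X) : SeqAscoliSpace X :=
  fun _ _ hfg => h _ hfg.isCompact_insert_range

theorem exists_seq_of_not_equicontinuousAt {α ι : Type*} [PseudoMetricSpace α] {F : ι → X → α}
    (hF : ∀ i, Continuous (F i)) {z : X} (h : ¬ EquicontinuousAt F z) :
    ∃ δ > 0, ∃ (f : ℕ → ι) (U : ℕ → Set X), (∀ n, IsOpen (U n)) ∧ (∀ n, (U n).Nonempty) ∧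
      ∀ n, ∀ y ∈ U n, 3 * δ < dist (F (f n) z) (F (f n) y) ∧
        ∀ m < n, dist (F (f m) z) (F (f m) y) < δ := by
  rw [Metric.equicontinuousAt_iff_right] at h
  push Not at h
  obtain ⟨ε, hε, hfar⟩ := h
  have hstep : ∀ s : Finset (ι × X), ∃ p : ι × X, ε ≤ dist (F p.1 z) (F p.1 p.2) ∧
      ∀ q ∈ s, dist (F q.1 z) (F q.1 p.2) < ε / 4 := by
    intro s
    have hnear : ∀ᶠ y in 𝓝 z, ∀ q ∈ s, dist (F q.1 z) (F q.1 y) < ε / 4 :=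
      s.eventually_all.2 fun q _ => ((hF q.1).continuousAt.eventually
        (Metric.ball_mem_nhds _ (by positivity : 0 < ε / 4))).mono fun y hy => by
          rwa [dist_comm] at hy
    obtain ⟨y, ⟨i, hi⟩, hy⟩ := (hfar.and_eventually hnear).exists
    exact ⟨(i, y), hi, hy⟩
  obtain ⟨p, hp, hpq⟩ := exists_seq_of_forall_finset_exists
    (fun p : ι × X => ε ≤ dist (F p.1 z) (F p.1 p.2))
    (fun q p => dist (F q.1 z) (F q.1 p.2) < ε / 4) fun s _ => hstep s
  refine ⟨ε / 4, by positivity, fun n => (p n).1,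
    fun n => {y | 3 * (ε / 4) < dist (F (p n).1 z) (F (p n).1 y)} ∩
      ⋂ m ∈ Iio n, {y | dist (F (p m).1 z) (F (p m).1 y) < ε / 4}, fun n => ?_, fun n => ?_,
    fun n y hy => ⟨hy.1, fun m hm => mem_iInter₂.1 hy.2 m hm⟩⟩
  · exact (isOpen_lt continuous_const (continuous_const.dist (hF _))).inter
      ((finite_Iio n).isOpen_biInter fun m _ => isOpen_lt (continuous_const.dist (hF _))
        continuous_const)
  · exact ⟨(p n).2, lt_of_lt_of_le (by linarith) (hp n),
      mem_iInter₂.2 fun m hm => hpq m n hm⟩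

theorem exists_lt_forall_dist_lt_of_isCompact {α : Type*} [PseudoMetricSpace α]
    {S : Set C(X, α)} (hS : IsCompact S) {K : Set X} (hK : IsCompact K) {f : ℕ → C(X, α)}
    (hf : ∀ n, f n ∈ S) {δ : ℝ} (hδ : 0 < δ) :
    ∃ m n, m < n ∧ ∀ x ∈ K, dist (f n x) (f m x) < δ := by
  have : CompactSpace K := isCompact_iff_compactSpace.mp hK
  obtain ⟨g, -, ψ, hψ, hlim⟩ := (hS.image (ContinuousMap.continuous_restrict K)).tendsto_subseq
    (x := fun n => (f n).restrict K) fun n => mem_image_of_mem _ (hf n)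
  obtain ⟨N, hN⟩ := Metric.cauchySeq_iff'.1 hlim.cauchySeq δ hδ
  exact ⟨ψ N, ψ (N + 1), hψ N.lt_succ_self, fun x hx =>
    (ContinuousMap.dist_apply_le_dist ⟨x, hx⟩).trans_lt (hN (N + 1) N.le_succ)⟩

theorem SelectivelyOmegaBounded.ascoliSpace (h : SelectivelyOmegaBounded X) :
    AscoliSpace X := by
  intro S hS z
  by_contra hz
  obtain ⟨δ, hδ, f, U, hUo, hUne, hU⟩ :=
    exists_seq_of_not_equicontinuousAt (fun f : S => (f : C(X, ℝ)).continuous) hz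
  obtain ⟨x, hxU, φ, hφ, hK⟩ := h U hUo hUne
  obtain ⟨i, j, hij, hclose⟩ := exists_lt_forall_dist_lt_of_isCompact hS (hK.insert z)
    (fun n => (f (φ n)).2) hδ
  obtain ⟨hfar, hnear⟩ := hU (φ j) (x (φ j)) (hxU _)
  have hz := hclose z (mem_insert _ _)
  have hx := hclose (x (φ j)) (mem_insert_of_mem _ (subset_closure ⟨j, rfl⟩))
  rw [dist_comm] at hx
  refine hfar.not_ge ((dist_triangle4 _ ((f (φ i) : C(X, ℝ)) z)
    ((f (φ i) : C(X, ℝ)) (x (φ j))) _).trans ?_)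
  linarith [hnear (φ i) (hφ hij)]

theorem exists_selection_isCompact_closure_of_frequently [R1Space X] {U : ℕ → Set X}
    (hne : ∀ n, (U n).Nonempty) {C : Set X} (hC : IsCompact C)
    (hmeet : ∃ᶠ n in atTop, (C ∩ U n).Nonempty) :
    ∃ x : ℕ → X, (∀ n, x n ∈ U n) ∧
      ∃ φ : ℕ → ℕ, StrictMono φ ∧ IsCompact (closure (range (x ∘ φ))) := by
  classical
  obtain ⟨φ, hφ, hφC⟩ := extraction_of_frequently_atTop hmeet
  let x n := if h : (C ∩ U n).Nonempty then h.some else (hne n).some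
  have hx : ∀ n, (C ∩ U n).Nonempty → x n ∈ C ∩ U n := fun n h => by
    simp only [x, dif_pos h]; exact h.some_mem
  refine ⟨x, fun n => ?_, φ, hφ, hC.closure_of_subset ?_⟩
  · by_cases h : (C ∩ U n).Nonempty
    · exact (hx n h).2
    · simp only [x, dif_neg h]; exact (hne n).some_mem
  · rintro _ ⟨k, rfl⟩
    exact (hx _ (hφC k)).1

theorem exists_bump_of_mem_isOpen [CompletelyRegularSpace X] {U : Set X} (hU : IsOpen U)
    {p : X} (hp : p ∈ U) : ∃ g : C(X, ℝ), g p = 1 ∧ (∀ x, 0 ≤ g x) ∧ ∀ x ∉ U, g x = 0 := by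
  obtain ⟨f, hfp, hfU⟩ :=
    CompletelyRegularSpace.exists_BCNN hU.isClosed_compl (not_not_intro hp)
  exact ⟨⟨fun x => f x, NNReal.continuous_coe.comp f.continuous⟩, by simp [hfp],
    fun x => (f x).2, fun x hx => by simp [hfU x hx]⟩

theorem Pseudocompact.not_locallyFinite [CompletelyRegularSpace X] (hpc : Pseudocompact X)
    {W : ℕ → Set X} (hW : ∀ n, IsOpen (W n)) (hne : ∀ n, (W n).Nonempty) :
    ¬ LocallyFinite W := by
  intro hlf
  choose p hp using hne
  choose g hg1 hg0 hgW using fun n => exists_bump_of_mem_isOpen (hW n) (hp n)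
  have hsupp : LocallyFinite fun n => Function.support fun x => n * g n x :=
    hlf.subset fun n x hx => by_contra fun hxW => hx (by simp [hgW n x hxW])
  obtain ⟨M, hM⟩ := hpc ⟨fun x => ∑ᶠ n : ℕ, n * g n x,
    continuous_finsum (fun n => continuous_const.mul (g n).continuous) hsupp⟩
  obtain ⟨m, hm⟩ := exists_nat_gt M
  have hpeak : (m : ℝ) ≤ ∑ᶠ n : ℕ, n * g n (p m) := by
    simpa [hg1] using single_le_finsum m (hsupp.point_finite (p m))
      fun n => mul_nonneg n.cast_nonneg (hg0 n _)
  have hbound : |∑ᶠ n : ℕ, n * g n (p m)| ≤ M := hM (p m)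
  linarith [le_abs_self (∑ᶠ n : ℕ, n * g n (p m))]

theorem ContinuousMap.tendsto_of_eventually_eqOn {ι Y : Type*} [TopologicalSpace Y]
    {l : Filter ι} {f : ι → C(X, Y)} {g : C(X, Y)}
    (h : ∀ K, IsCompact K → ∀ᶠ i in l, EqOn (f i) g K) : Tendsto f l (𝓝 g) :=
  ContinuousMap.tendsto_nhds_compactOpen.2 fun K hK _ _ hgU =>
    (h K hK).mono fun _ hi _ hx => hi hx ▸ hgU hx

theorem SeqAscoliSpace.selectivelyOmegaBounded [T35Space X] (hpc : Pseudocompact X)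
    (h : SeqAscoliSpace X) : SelectivelyOmegaBounded X := by
  intro U hUo hUne
  by_contra hbad
  have hfin : ∀ K, IsCompact K → ∀ᶠ n in atTop, ¬ (K ∩ U n).Nonempty := fun K hK =>
    not_frequently.1 fun hmeet =>
      hbad (exists_selection_isCompact_closure_of_frequently hUne hK hmeet)
  choose p hp using hUne
  choose G hG1 _ hGU using fun n => exists_bump_of_mem_isOpen (hUo n) (hp n)
  have hlim : Tendsto G atTop (𝓝 0) := ContinuousMap.tendsto_of_eventually_eqOn fun K hK =>
    (hfin K hK).mono fun n hn x hx => hGU n x fun hxU => hn ⟨x, hx, hxU⟩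
  obtain ⟨z, hz⟩ : ∃ z, ∀ V ∈ 𝓝 z, {n | ({x | 1 / 2 < G n x} ∩ V).Nonempty}.Infinite := by
    simpa [LocallyFinite] using hpc.not_locallyFinite
      (fun n => isOpen_lt continuous_const (G n).continuous) fun n => ⟨p n, by norm_num [hG1]⟩
  have hV := Metric.equicontinuousAt_iff_right.1 (h G 0 hlim z) (1 / 2) one_half_pos
  obtain ⟨n, ⟨y, hyG, hyV⟩, hzU⟩ :=
    ((Nat.frequently_atTop_iff_infinite.2 (hz _ hV)).and_eventually
      (hfin {z} isCompact_singleton)).exists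
  have hGz : G n z = 0 := hGU n z fun hzU' => hzU ⟨z, rfl, hzU'⟩
  have := hyV ⟨G n, mem_insert_of_mem _ (mem_range_self n)⟩
  simp only [hGz, dist_zero_left, Real.norm_eq_abs] at this
  linarith [le_abs_self (G n y), hyG.out]

end

theorem stmt12 (X : Type*) [TopologicalSpace X] [T35Space X]
    (hpc : Pseudocompact X) :
    (SelectivelyOmegaBounded X ↔ AscoliSpace X) ∧
    (AscoliSpace X ↔ SeqAscoliSpace X) := by
  have hSA : SelectivelyOmegaBounded X → AscoliSpace X := SelectivelyOmegaBounded.ascoliSpace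
  have hAS : AscoliSpace X → SeqAscoliSpace X := AscoliSpace.seqAscoliSpace
  have hSS : SeqAscoliSpace X → SelectivelyOmegaBounded X :=
    SeqAscoliSpace.selectivelyOmegaBounded hpc
  exact ⟨⟨hSA, hSS ∘ hAS⟩, ⟨hAS, hSA ∘ hSS⟩⟩
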